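/- arXiv:0712.3774 — 4 statements merged into one kernel-verified Lean document; each statement's English description precedes it below -/
import Mathlib

section
/- Let V, W ∈ ℝ³ with nonnegative first components ρ_V, ρ_W ≥ 0, and define ρ := (ρ_V + ρ_W)/2 + (λ/2)(ρ_V u_V - ρ_W u_W), where u_V, u_W are the velocities. If λ · max(|u_V|, |u_W|) < 1, then ρ ≥ 0; moreover ρ > 0 if ρ_V + ρ_W > 0. -/
/-- Positivity of the density in the Lax-Friedrichs-type update: if
`ρ_V, ρ_W ≥ 0` and `λ max(|u_V|,|u_W|) < 1`, then
`ρ = (ρ_V + ρ_W)/2 + (λ/2)(ρ_V u_V - ρ_W u_W) ≥ 0`, with strict positivity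
when `ρ_V + ρ_W > 0`. -/
theorem stmt_7 (ρV ρW uV uW lam : ℝ)
    (hρV : 0 ≤ ρV) (hρW : 0 ≤ ρW) (hlam : 0 ≤ lam)
    (hCFL : lam * max |uV| |uW| < 1) :
    0 ≤ (ρV + ρW) / 2 + lam / 2 * (ρV * uV - ρW * uW) ∧
    (0 < ρV + ρW → 0 < (ρV + ρW) / 2 + lam / 2 * (ρV * uV - ρW * uW)) := by
  set M := max |uV| |uW| with hM
  have h1 : ρV * uV ≥ -(ρV * M) := by
    have : |ρV * uV| ≤ ρV * M := by
      rw [abs_mul, abs_of_nonneg hρV]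
      exact mul_le_mul_of_nonneg_left (le_max_left _ _) hρV
    linarith [neg_abs_le (ρV * uV)]
  have h2 : ρW * uW ≤ ρW * M := by
    have : |ρW * uW| ≤ ρW * M := by
      rw [abs_mul, abs_of_nonneg hρW]
      exact mul_le_mul_of_nonneg_left (le_max_right _ _) hρW
    linarith [le_abs_self (ρW * uW)]
  have key : lam / 2 * (ρV * uV - ρW * uW) ≥ -(lam * M * (ρV + ρW) / 2) := by
    have := mul_le_mul_of_nonneg_left (by linarith : -(M * (ρV + ρW)) ≤ ρV * uV - ρW * uW) hlam
    nlinarith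
  constructor
  · nlinarith
  · intro h; nlinarith
end

section
/- Suppose nonnegative reals ρ₊, ρ₋, weights w₊ := (1 + λu₊)/2 ≥ 0, w₋ := (1 - λu₋)/2 ≥ 0, positive reals a, a', ρ' > 0, and reals S', S₁, S₂ < S₀ satisfy, for every p > 1, (a'/a) ρ' (S₀ - S')^p ≤ ρ₊ w₊ (S₀ - S₁)^p + ρ₋ w₋ (S₀ - S₂)^p. Then S' ≥ min(S₁, S₂). -/
/-- Discrete minimum entropy principle extraction: if for every `p > 1`
`(a'/a) ρ' (S₀-S')^p ≤ ρ₊ w₊ (S₀-S₁)^p + ρ₋ w₋ (S₀-S₂)^p`, where all the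
quantities are fixed, `ρ', a, a' > 0`, `ρ₊, ρ₋, w₊, w₋ ≥ 0` and
`S', S₁, S₂ < S₀`, then `S' ≥ min(S₁, S₂)`. -/
theorem stmt_9 (ρp ρm wp wm a a' ρ' S' S₁ S₂ S₀ : ℝ)
    (hρp : 0 ≤ ρp) (hρm : 0 ≤ ρm) (hwp : 0 ≤ wp) (hwm : 0 ≤ wm)
    (ha : 0 < a) (ha' : 0 < a') (hρ' : 0 < ρ')
    (hS' : S' < S₀) (hS₁ : S₁ < S₀) (hS₂ : S₂ < S₀)
    (h : ∀ p : ℝ, 1 < p →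
      a' / a * ρ' * (S₀ - S') ^ p ≤
        ρp * wp * (S₀ - S₁) ^ p + ρm * wm * (S₀ - S₂) ^ p) :
    min S₁ S₂ ≤ S' := by
  by_contra hlt
  push_neg at hlt
  rw [lt_min_iff] at hlt
  obtain ⟨h1, h2⟩ := hlt
  set A : ℝ := S₀ - S' with hA
  set B : ℝ := max (S₀ - S₁) (S₀ - S₂) with hB
  have hB0 : 0 < B := lt_max_of_lt_left (by linarith)
  have hBA : B < A := max_lt (by linarith) (by linarith)
  have hc : 0 < a' / a * ρ' := mul_pos (div_pos ha' ha) hρ'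
  set c : ℝ := a' / a * ρ' with hcdef
  set M : ℝ := ρp * wp + ρm * wm with hM
  have hM0 : 0 ≤ M := add_nonneg (mul_nonneg hρp hwp) (mul_nonneg hρm hwm)
  have key : ∀ p : ℝ, 1 < p → (A / B) ^ p ≤ M / c := by
    intro p hp
    have hp0 : 0 ≤ p := by linarith
    have h1' : ρp * wp * (S₀ - S₁) ^ p ≤ ρp * wp * B ^ p := by
      apply mul_le_mul_of_nonneg_left _ (mul_nonneg hρp hwp)
      exact Real.rpow_le_rpow (by linarith) (le_max_left _ _) hp0
    have h2' : ρm * wm * (S₀ - S₂) ^ p ≤ ρm * wm * B ^ p := by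
      apply mul_le_mul_of_nonneg_left _ (mul_nonneg hρm hwm)
      exact Real.rpow_le_rpow (by linarith) (le_max_right _ _) hp0
    have hmain : c * A ^ p ≤ M * B ^ p := by
      calc c * A ^ p ≤ ρp * wp * (S₀ - S₁) ^ p + ρm * wm * (S₀ - S₂) ^ p := h p hp
        _ ≤ ρp * wp * B ^ p + ρm * wm * B ^ p := add_le_add h1' h2'
        _ = M * B ^ p := by ring
    have hBp : 0 < B ^ p := Real.rpow_pos_of_pos hB0 p
    rw [Real.div_rpow (by linarith) hB0.le, div_le_div_iff₀ hBp hc]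
    have heq : M / c * B ^ p * c = M * B ^ p := by field_simp
    linarith [hmain, heq]
  have hrat : (1 : ℝ) < A / B := (one_lt_div hB0).2 hBA
  obtain ⟨n, hn⟩ := pow_unbounded_of_one_lt (M / c) hrat
  have hp1 : (1 : ℝ) < (n : ℝ) + 2 := by have : (0:ℝ) ≤ n := Nat.cast_nonneg n; linarith
  have hkey := key ((n : ℝ) + 2) hp1
  have hmono : (A / B) ^ n ≤ (A / B) ^ ((n : ℝ) + 2) := by
    have : (A / B) ^ ((n : ℝ) + 2) = (A / B) ^ (n + 2 : ℕ) := by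
      rw [← Real.rpow_natCast (A / B) (n + 2)]
      norm_num
    rw [this]
    exact pow_le_pow_right₀ (by linarith) (by omega)
  linarith
end

section
/- Let Φ(ρ) := (u₋² + 2h(ρ₋))ρ² - 2ρ² h(ρ) where h(ρ) = κ γ/(γ-1) ρ^{γ-1} is the specific enthalpy of a polytropic/stiffened gas (κ > 0, 1 < γ < 5/3), and ρ₋ > 0, u₋ ≠ 0 are given with u₋² + 2h(ρ₋) > 0. Then Φ has a unique critical point ρ_max > 0 on (0, ∞), Φ is increasing on (0, ρ_max) and decreasing on (ρ_max, ∞), and Φ(ρ_max) > 0; consequently, for m > 0, the equation Φ(ρ) = m² has a solution ρ > 0 if and only if m² ≤ Φ(ρ_max), in which case there are exactly two roots φ₁ ≤ φ₂ (counted with multiplicity), which coincide if and only if m² = Φ(ρ_max). -/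
/-- Root analysis of the stationary-wave equation `Φ(ρ) = m²` for a
polytropic/stiffened gas with enthalpy `h(ρ) = κγ/(γ-1) ρ^{γ-1}`:
`Φ(ρ) = (um² + 2h(ρm))ρ² - 2ρ²h(ρ)` has a unique critical point `ρ_max > 0`,
is increasing before and decreasing after it, `Φ(ρ_max) > 0`, and for `m > 0`
the equation `Φ(ρ) = m²` is solvable iff `m² ≤ Φ(ρ_max)`, in which case there
are exactly two roots `φ₁ ≤ φ₂`, coinciding iff `m² = Φ(ρ_max)`. -/
theorem stmt_12 (κ γ ρm um : ℝ) (hκ : 0 < κ) (hγ : 1 < γ ∧ γ < 5/3)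
    (hρm : 0 < ρm) (hum : um ≠ 0)
    (h : ℝ → ℝ) (hh : ∀ ρ : ℝ, h ρ = κ * γ / (γ - 1) * ρ ^ (γ - 1))
    (Φ : ℝ → ℝ) (hΦ : ∀ ρ : ℝ, Φ ρ = (um ^ 2 + 2 * h ρm) * ρ ^ 2 - 2 * ρ ^ 2 * h ρ)
    (hpos : 0 < um ^ 2 + 2 * h ρm) :
    ∃ ρmax : ℝ, 0 < ρmax ∧
      deriv Φ ρmax = 0 ∧ (∀ ρ : ℝ, 0 < ρ → deriv Φ ρ = 0 → ρ = ρmax) ∧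
      StrictMonoOn Φ (Set.Ioc 0 ρmax) ∧
      StrictAntiOn Φ (Set.Ici ρmax) ∧
      0 < Φ ρmax ∧
      ∀ m : ℝ, 0 < m →
        ((∃ ρ : ℝ, 0 < ρ ∧ Φ ρ = m ^ 2) ↔ m ^ 2 ≤ Φ ρmax) ∧
        (m ^ 2 ≤ Φ ρmax →
          ∃ φ₁ φ₂ : ℝ, 0 < φ₁ ∧ φ₁ ≤ φ₂ ∧ Φ φ₁ = m ^ 2 ∧ Φ φ₂ = m ^ 2 ∧
            (∀ ρ : ℝ, 0 < ρ → Φ ρ = m ^ 2 → ρ = φ₁ ∨ ρ = φ₂) ∧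
            (φ₁ = φ₂ ↔ m ^ 2 = Φ ρmax)) := by
  obtain ⟨hγ1, hγ2⟩ := hγ
  have hγ1' : (0:ℝ) < γ - 1 := by linarith
  have hγne : γ - 1 ≠ 0 := ne_of_gt hγ1'
  set A : ℝ := um ^ 2 + 2 * h ρm with hAdef
  have hApos : 0 < A := hpos
  set C : ℝ := κ * γ / (γ - 1) with hCdef
  have hC : 0 < C := div_pos (mul_pos hκ (by linarith)) hγ1'
  set g : ℝ → ℝ := fun ρ => A * ρ ^ 2 - 2 * C * ρ ^ (γ + 1) with hgdef
  have hsplit : ∀ ρ : ℝ, 0 < ρ → ρ ^ (γ + 1) = ρ ^ 2 * ρ ^ (γ - 1) := by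
    intro ρ h0
    rw [show γ + 1 = (2:ℕ) + (γ - 1) by push_cast; ring, Real.rpow_add h0,
      Real.rpow_natCast]
  have hEq : Set.EqOn Φ g (Set.Ici 0) := by
    intro ρ hρ
    simp only [Set.mem_Ici] at hρ
    rcases hρ.eq_or_lt with h0 | h0
    · simp [hΦ, hgdef, ← h0, Real.zero_rpow (by linarith : γ + 1 ≠ 0)]
    · simp only [hΦ, hh, hgdef, hsplit ρ h0]
      ring
  have hg' : ∀ ρ : ℝ, HasDerivAt g (2 * A * ρ - 2 * C * ((γ + 1) * ρ ^ γ)) ρ := by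
    intro ρ
    have h1 : HasDerivAt (fun x : ℝ => x ^ (γ + 1)) ((γ + 1) * ρ ^ (γ + 1 - 1)) ρ :=
      Real.hasDerivAt_rpow_const (Or.inr (by linarith))
    have h1' : γ + 1 - 1 = γ := by ring
    rw [h1'] at h1
    have h2 : HasDerivAt (fun x : ℝ => x ^ 2) (2 * ρ) ρ := by
      simpa using hasDerivAt_pow 2 ρ
    have := (h2.const_mul A).sub (h1.const_mul (2 * C))
    exact this.congr_deriv (by ring)
  have hgc : Continuous g := by
    rw [continuous_iff_continuousAt]
    exact fun ρ => (hg' ρ).differentiableAt.continuousAt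
  have hΦd : ∀ ρ : ℝ, 0 < ρ → deriv Φ ρ = 2 * A * ρ - 2 * C * ((γ + 1) * ρ ^ γ) := by
    intro ρ hρ
    have hev : Φ =ᶠ[nhds ρ] g :=
      Filter.eventuallyEq_of_mem (Ioi_mem_nhds hρ) (fun x hx => hEq (Set.mem_Ici.mpr (le_of_lt hx)))
    rw [hev.deriv_eq, (hg' ρ).deriv]
  set D : ℝ := C * (γ + 1) with hDdef
  have hD : 0 < D := mul_pos hC (by linarith)
  set ρmax : ℝ := (A / D) ^ ((γ - 1)⁻¹) with hrmdef
  have hρmaxpos : 0 < ρmax := Real.rpow_pos_of_pos (div_pos hApos hD) _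
  have hkey : ρmax ^ (γ - 1) = A / D :=
    Real.rpow_inv_rpow (le_of_lt (div_pos hApos hD)) hγne
  have hfact : ∀ ρ : ℝ, 0 < ρ → deriv Φ ρ = 2 * D * ρ * (ρmax ^ (γ - 1) - ρ ^ (γ - 1)) := by
    intro ρ hρ
    rw [hΦd ρ hρ, hkey]
    have hργ : ρ ^ γ = ρ * ρ ^ (γ - 1) := by
      have h' := Real.rpow_add hρ 1 (γ - 1)
      rw [Real.rpow_one, show (1:ℝ) + (γ - 1) = γ by ring] at h'
      exact h'
    rw [hργ, hDdef]
    field_simp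
  -- base-rpow strict mono consequences
  have hbase : ∀ x y : ℝ, 0 ≤ x → x < y → x ^ (γ - 1) < y ^ (γ - 1) :=
    fun x y hx hxy => Real.rpow_lt_rpow hx hxy hγ1'
  have hderiv0 : deriv Φ ρmax = 0 := by
    rw [hfact ρmax hρmaxpos]; ring
  have huniq : ∀ ρ : ℝ, 0 < ρ → deriv Φ ρ = 0 → ρ = ρmax := by
    intro ρ hρ hρ0
    rw [hfact ρ hρ] at hρ0
    have h1 : ρ ^ (γ - 1) = ρmax ^ (γ - 1) := by
      rcases mul_eq_zero.mp hρ0 with h | h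
      · exfalso
        rcases mul_eq_zero.mp h with h' | h'
        · exact absurd h' (by positivity)
        · exact absurd h' (ne_of_gt hρ)
      · linarith
    calc ρ = (ρ ^ (γ - 1)) ^ (γ - 1)⁻¹ := (Real.rpow_rpow_inv hρ.le hγne).symm
      _ = (ρmax ^ (γ - 1)) ^ (γ - 1)⁻¹ := by rw [h1]
      _ = ρmax := Real.rpow_rpow_inv hρmaxpos.le hγne
  have hcontOn : ∀ s : Set ℝ, s ⊆ Set.Ici 0 → ContinuousOn Φ s :=
    fun s hs => (hgc.continuousOn).congr (fun x hx => hEq (hs hx))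
  have hmono : StrictMonoOn Φ (Set.Ioc 0 ρmax) := by
    apply strictMonoOn_of_deriv_pos (convex_Ioc 0 ρmax)
    · exact hcontOn _ (fun x hx => le_of_lt hx.1)
    · intro x hx
      rw [interior_Ioc] at hx
      rw [hfact x hx.1]
      have hs := hbase x ρmax hx.1.le hx.2
      exact mul_pos (mul_pos (by positivity) hx.1) (by linarith)
  have hanti : StrictAntiOn Φ (Set.Ici ρmax) := by
    apply strictAntiOn_of_deriv_neg (convex_Ici ρmax)
    · exact hcontOn _ (fun x hx => le_trans hρmaxpos.le hx)
    · intro x hx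
      rw [interior_Ici] at hx
      have hxpos : 0 < x := lt_trans hρmaxpos hx
      rw [hfact x hxpos]
      have hs := hbase ρmax x hρmaxpos.le hx
      exact mul_neg_of_pos_of_neg (mul_pos (by positivity) hxpos) (by linarith)
  have hΦmaxval : Φ ρmax = A * ρmax ^ 2 * ((γ - 1) / (γ + 1)) := by
    rw [hEq (Set.mem_Ici.mpr hρmaxpos.le)]
    simp only [hgdef]
    rw [hsplit ρmax hρmaxpos, hkey, hDdef]
    field_simp
    ring
  have hΦmaxpos : 0 < Φ ρmax := by
    rw [hΦmaxval]
    have : (0:ℝ) < γ + 1 := by linarith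
    positivity
  have hΦ0 : Φ 0 = 0 := by rw [hΦ]; ring
  -- upper bound: Φ ρ ≤ Φ ρmax for all ρ > 0
  have hle : ∀ ρ : ℝ, 0 < ρ → Φ ρ ≤ Φ ρmax := by
    intro ρ hρ
    rcases lt_trichotomy ρ ρmax with hlt | heq | hgt
    · exact le_of_lt (hmono ⟨hρ, hlt.le⟩ ⟨hρmaxpos, le_refl _⟩ hlt)
    · rw [heq]
    · exact le_of_lt (hanti (Set.mem_Ici.mpr (le_refl _)) (Set.mem_Ici.mpr hgt.le) hgt)
  refine ⟨ρmax, hρmaxpos, hderiv0, huniq, hmono, hanti, hΦmaxpos, ?_⟩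
  intro m hm
  have hm2 : 0 < m ^ 2 := by positivity
  have hexists : m ^ 2 ≤ Φ ρmax →
      ∃ φ₁ φ₂ : ℝ, 0 < φ₁ ∧ φ₁ ≤ φ₂ ∧ Φ φ₁ = m ^ 2 ∧ Φ φ₂ = m ^ 2 ∧
        (∀ ρ : ℝ, 0 < ρ → Φ ρ = m ^ 2 → ρ = φ₁ ∨ ρ = φ₂) ∧
        (φ₁ = φ₂ ↔ m ^ 2 = Φ ρmax) := by
    intro hmle
    -- φ₁ via IVT on [0, ρmax]
    obtain ⟨φ₁, hφ₁mem, hφ₁⟩ := intermediate_value_Icc hρmaxpos.le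
      (hcontOn _ (fun x hx => hx.1)) (by rw [hΦ0]; exact ⟨hm2.le, hmle⟩)
    have hφ₁pos : 0 < φ₁ := by
      rcases hφ₁mem.1.eq_or_lt with h0 | h0
      · exfalso; rw [← h0, hΦ0] at hφ₁; linarith
      · exact h0
    -- find R with Φ R < 0
    set R : ℝ := max ρmax ((A / C) ^ ((γ - 1)⁻¹)) + 1 with hRdef
    have hRρ : ρmax < R := lt_of_le_of_lt (le_max_left _ _) (lt_add_one _)
    have hRpos : 0 < R := lt_trans hρmaxpos hRρ
    have hR1 : (A / C) ^ ((γ - 1)⁻¹) < R :=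
      lt_of_le_of_lt (le_max_right _ _) (lt_add_one _)
    have hΦR : Φ R < 0 := by
      rw [hEq (Set.mem_Ici.mpr hRpos.le)]
      simp only [hgdef]
      rw [hsplit R hRpos]
      have hAC : A / C < R ^ (γ - 1) := by
        calc A / C = ((A / C) ^ ((γ - 1)⁻¹)) ^ (γ - 1) :=
              (Real.rpow_inv_rpow (le_of_lt (div_pos hApos hC)) hγne).symm
          _ < R ^ (γ - 1) :=
              hbase _ _ (Real.rpow_nonneg (le_of_lt (div_pos hApos hC)) _) hR1
      have h2 : 2 * C * R ^ 2 * (A / C) < 2 * C * R ^ 2 * R ^ (γ - 1) :=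
        mul_lt_mul_of_pos_left hAC (by positivity)
      have h3 : 2 * C * R ^ 2 * (A / C) = 2 * A * R ^ 2 := by
        field_simp
      have hR2 : (0:ℝ) < R ^ 2 := by positivity
      have h5 : 2 * A * R ^ 2 < 2 * C * (R ^ 2 * R ^ (γ - 1)) := by
        rw [show 2 * C * (R ^ 2 * R ^ (γ - 1)) = 2 * C * R ^ 2 * R ^ (γ - 1) from by ring,
          ← h3]
        exact h2
      linarith [mul_pos hApos hR2]
    -- φ₂ via IVT on [ρmax, R]
    obtain ⟨φ₂, hφ₂mem, hφ₂⟩ := intermediate_value_Icc' hRρ.le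
      (hcontOn _ (fun x hx => le_trans hρmaxpos.le hx.1))
      (⟨by linarith, hmle⟩ : m ^ 2 ∈ Set.Icc (Φ R) (Φ ρmax))
    have hφ₂pos : 0 < φ₂ := lt_of_lt_of_le hρmaxpos hφ₂mem.1
    refine ⟨φ₁, φ₂, hφ₁pos, le_trans hφ₁mem.2 hφ₂mem.1, hφ₁, hφ₂, ?_, ?_⟩
    · intro ρ hρ hρeq
      rcases le_or_gt ρ ρmax with hcase | hcase
      · left
        exact hmono.injOn ⟨hρ, hcase⟩ ⟨hφ₁pos, hφ₁mem.2⟩ (by rw [hρeq, hφ₁])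
      · right
        exact hanti.injOn (Set.mem_Ici.mpr hcase.le) (Set.mem_Ici.mpr hφ₂mem.1)
          (by rw [hρeq, hφ₂])
    · constructor
      · intro heq
        have h1 : φ₁ = ρmax := le_antisymm hφ₁mem.2 (heq ▸ hφ₂mem.1)
        rw [← hφ₁, h1]
      · intro heq
        have h1 : φ₁ = ρmax :=
          hmono.injOn ⟨hφ₁pos, hφ₁mem.2⟩ ⟨hρmaxpos, le_refl _⟩ (by rw [hφ₁, heq])
        have h2 : φ₂ = ρmax :=
          hanti.injOn (Set.mem_Ici.mpr hφ₂mem.1) (Set.mem_Ici.mpr (le_refl _))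
            (by rw [hφ₂, heq])
        rw [h1, h2]
  constructor
  · constructor
    · rintro ⟨ρ, hρ, hρeq⟩
      rw [← hρeq]
      exact hle ρ hρ
    · intro hmle
      obtain ⟨φ₁, _, hφ₁pos, _, hφ₁, _⟩ := hexists hmle
      exact ⟨φ₁, hφ₁pos, hφ₁⟩
  · exact hexists
end

section
/- Suppose ρ, S : ℝ × [0, ∞) → ℝ are bounded measurable with ρ ≥ 0, ρ ≥ ρ₀ > 0 on the relevant region, and suppose that for every p > 1, ∫_{|x| ≤ R} ρ(x,t)(S₀ - S(x,t))^p dx ≤ ∫_{|x| ≤ R + tM} ρ(x,0)(S₀ - S(x,0))^p dx, where S₀ > ess-sup S. Then ess-inf_{|x| ≤ R} S(x, t) ≥ ess-inf_{|x| ≤ R + tM} S(x, 0). -/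
open MeasureTheory

/-- Core analytic step of the minimum entropy principle: if the weighted
`L^p` inequalities
`∫_{|x|≤R} ρ(x,t)(S₀-S(x,t))^p dx ≤ ∫_{|x|≤R+tM} ρ(x,0)(S₀-S(x,0))^p dx`
hold for all `p > 1`, with `ρ` bounded between positive constants and `S`
bounded with `S < S₀`, then
`ess-inf_{|x|≤R} S(·,t) ≥ ess-inf_{|x|≤R+tM} S(·,0)`. -/
theorem stmt_18 (ρ S : ℝ → ℝ → ℝ) (R t M S₀ ρ₀ Cρ CS : ℝ)
    (hR : 0 < R) (ht : 0 ≤ t) (hM : 0 ≤ M)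
    (hρ₀ : 0 < ρ₀)
    (hρmeas : ∀ τ, Measurable fun x => ρ x τ)
    (hSmeas : ∀ τ, Measurable fun x => S x τ)
    (hρb : ∀ x τ, ρ₀ ≤ ρ x τ ∧ ρ x τ ≤ Cρ)
    (hSb : ∀ x τ, |S x τ| ≤ CS)
    (hS₀ : CS < S₀)
    (hLp : ∀ p : ℝ, 1 < p →
      ∫ x in {x : ℝ | |x| ≤ R}, ρ x t * (S₀ - S x t) ^ p ≤
        ∫ x in {x : ℝ | |x| ≤ R + t * M}, ρ x 0 * (S₀ - S x 0) ^ p) :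
    essInf (fun x => S x 0) (volume.restrict {x : ℝ | |x| ≤ R + t * M}) ≤
      essInf (fun x => S x t) (volume.restrict {x : ℝ | |x| ≤ R}) := by
  -- basic set facts
  have hsetR : {x : ℝ | |x| ≤ R} = Set.Icc (-R) R := by
    ext x; simp [abs_le]
  have hL : 0 < R + t * M := by positivity
  have hsetL : {x : ℝ | |x| ≤ R + t * M} = Set.Icc (-(R + t * M)) (R + t * M) := by
    ext x; simp [abs_le]
  set μt := volume.restrict {x : ℝ | |x| ≤ R} with hμt
  set μ0 := volume.restrict {x : ℝ | |x| ≤ R + t * M} with hμ0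
  have hμtfin : IsFiniteMeasure μt := by
    constructor
    rw [hμt, Measure.restrict_apply_univ, hsetR, Real.volume_Icc]
    exact ENNReal.ofReal_lt_top
  have hμ0fin : IsFiniteMeasure μ0 := by
    constructor
    rw [hμ0, Measure.restrict_apply_univ, hsetL, Real.volume_Icc]
    exact ENNReal.ofReal_lt_top
  have hμ0ne : μ0 ≠ 0 := by
    intro h
    have : μ0 Set.univ = 0 := by rw [h]; rfl
    rw [hμ0, Measure.restrict_apply_univ, hsetL, Real.volume_Icc] at this
    have : (0:ℝ) < (R + t * M) - -(R + t * M) := by linarith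
    simp [ENNReal.ofReal_eq_zero, not_le.mpr this] at *
    linarith
  haveI : (ae μ0).NeBot := ae_neBot.mpr hμ0ne
  have hμtne : μt ≠ 0 := by
    intro h
    have : μt Set.univ = 0 := by rw [h]; rfl
    rw [hμt, Measure.restrict_apply_univ, hsetR, Real.volume_Icc] at this
    have h2R : (0:ℝ) < R - -R := by linarith
    simp [ENNReal.ofReal_eq_zero, not_le.mpr h2R] at *
    linarith
  haveI : (ae μt).NeBot := ae_neBot.mpr hμtne
  have hCS : 0 ≤ CS := le_trans (abs_nonneg _) (hSb 0 0)
  have hCρpos : 0 < Cρ := lt_of_lt_of_le hρ₀ ((hρb 0 0).1.trans (hρb 0 0).2)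
  set m₀ := essInf (fun x => S x 0) μ0 with hm₀
  set mt := essInf (fun x => S x t) μt with hmt
  by_contra hcon
  push_neg at hcon
  -- m₀ ≤ CS
  have hbdd0 : Filter.IsBoundedUnder (· ≥ ·) (ae μ0) (fun x => S x 0) :=
    Filter.isBoundedUnder_of ⟨-CS, fun x => neg_le_of_abs_le (hSb x 0)⟩
  have hm₀le : m₀ ≤ CS := by
    have : ∃ᶠ x in ae μ0, S x 0 ≤ CS :=
      (Filter.Eventually.of_forall fun x => le_of_abs_le (hSb x 0)).frequently
    exact Filter.liminf_le_of_frequently_le this hbdd0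
  have hm₀S₀ : m₀ < S₀ := lt_of_le_of_lt hm₀le hS₀
  set a := (mt + m₀) / 2 with ha
  have hamt : mt < a := by rw [ha]; linarith
  have ham₀ : a < m₀ := by rw [ha]; linarith
  have haS₀ : a < S₀ := lt_trans ham₀ hm₀S₀
  -- the set where S(·,t) < a has positive measure
  set A := {x : ℝ | S x t < a} with hA
  have hAmeas : MeasurableSet A := measurableSet_lt (hSmeas t) measurable_const
  have hμA : μt A ≠ 0 := by
    intro h
    have hae : ∀ᵐ x ∂μt, a ≤ S x t := by
      rw [ae_iff]
      simpa [hA, not_le] using h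
    have hbddt : Filter.IsBoundedUnder (· ≤ ·) (ae μt) (fun x => S x t) :=
      Filter.isBoundedUnder_of ⟨CS, fun x => le_of_abs_le (hSb x t)⟩
    have : a ≤ mt := Filter.le_liminf_of_le hbddt.isCoboundedUnder_ge hae
    linarith
  have hμAfin : μt A < ⊤ := lt_of_le_of_lt (measure_mono (Set.subset_univ _)) hμtfin.measure_univ_lt_top
  set α := (μt A).toReal with hα
  have hαpos : 0 < α := ENNReal.toReal_pos hμA hμAfin.ne
  set β := (μ0 Set.univ).toReal with hβ
  have hβnonneg : 0 ≤ β := ENNReal.toReal_nonneg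
  -- core estimate for each p > 1
  have key : ∀ p : ℝ, 1 < p → ρ₀ * (S₀ - a) ^ p * α ≤ Cρ * (S₀ - m₀) ^ p * β := by
    intro p hp
    have hp0 : (0:ℝ) ≤ p := by linarith
    -- measurability and integrability of the integrands
    have hmeasf : ∀ τ, Measurable fun x => ρ x τ * (S₀ - S x τ) ^ p := by
      intro τ
      exact (hρmeas τ).mul
        (((Real.continuous_rpow_const hp0).measurable).comp
          (measurable_const.sub (hSmeas τ)))
    have hbound : ∀ τ x, |ρ x τ * (S₀ - S x τ) ^ p| ≤ Cρ * (S₀ + CS) ^ p := by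
      intro τ x
      have h1 : 0 ≤ ρ x τ := le_trans hρ₀.le (hρb x τ).1
      have h2 : 0 < S₀ - S x τ := by
        have := neg_le_of_abs_le (hSb x τ); linarith [le_of_abs_le (hSb x τ)]
      have h3 : S₀ - S x τ ≤ S₀ + CS := by
        have := neg_le_of_abs_le (hSb x τ); linarith
      rw [abs_of_nonneg (mul_nonneg h1 (Real.rpow_nonneg h2.le p))]
      exact mul_le_mul (hρb x τ).2 (Real.rpow_le_rpow h2.le h3 hp0)
        (Real.rpow_nonneg h2.le p) hCρpos.le
    have hintt : Integrable (fun x => ρ x t * (S₀ - S x t) ^ p) μt := by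
      refine Integrable.mono' (integrable_const (Cρ * (S₀ + CS) ^ p))
        (hmeasf t).aestronglyMeasurable ?_
      exact Filter.Eventually.of_forall fun x => hbound t x
    have hint0 : Integrable (fun x => ρ x 0 * (S₀ - S x 0) ^ p) μ0 := by
      refine Integrable.mono' (integrable_const (Cρ * (S₀ + CS) ^ p))
        (hmeasf 0).aestronglyMeasurable ?_
      exact Filter.Eventually.of_forall fun x => hbound 0 x
    -- lower bound of LHS
    have hlow : ρ₀ * (S₀ - a) ^ p * α ≤ ∫ x, ρ x t * (S₀ - S x t) ^ p ∂μt := by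
      have hg : ∀ x, A.indicator (fun _ => ρ₀ * (S₀ - a) ^ p) x ≤
          ρ x t * (S₀ - S x t) ^ p := by
        intro x
        by_cases hx : x ∈ A
        · rw [Set.indicator_of_mem hx]
          have hxa : S x t < a := hx
          have h2 : 0 < S₀ - a := by linarith
          refine mul_le_mul (hρb x t).1 (Real.rpow_le_rpow h2.le (by linarith) hp0)
            (Real.rpow_nonneg h2.le p) (le_trans hρ₀.le (hρb x t).1)
        · rw [Set.indicator_of_notMem hx]
          have h1 : 0 ≤ ρ x t := le_trans hρ₀.le (hρb x t).1
          have h2 : 0 ≤ S₀ - S x t := by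
            have := le_of_abs_le (hSb x t); linarith
          positivity
      have hind : Integrable (A.indicator fun _ => ρ₀ * (S₀ - a) ^ p) μt :=
        (integrable_const _).indicator hAmeas
      calc ρ₀ * (S₀ - a) ^ p * α
          = ∫ x, A.indicator (fun _ => ρ₀ * (S₀ - a) ^ p) x ∂μt := by
            rw [integral_indicator_const _ hAmeas, smul_eq_mul, mul_comm]; rfl
        _ ≤ ∫ x, ρ x t * (S₀ - S x t) ^ p ∂μt :=
            integral_mono_ae hind hintt (Filter.Eventually.of_forall hg)
    -- upper bound of RHS
    have hup : ∫ x, ρ x 0 * (S₀ - S x 0) ^ p ∂μ0 ≤ Cρ * (S₀ - m₀) ^ p * β := by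
      have hae : ∀ᵐ x ∂μ0, m₀ ≤ S x 0 := ae_essInf_le hbdd0
      have hle : ∀ᵐ x ∂μ0, ρ x 0 * (S₀ - S x 0) ^ p ≤ Cρ * (S₀ - m₀) ^ p := by
        filter_upwards [hae] with x hx
        have h1 : 0 ≤ ρ x 0 := le_trans hρ₀.le (hρb x 0).1
        have h2 : 0 < S₀ - S x 0 := by
          have := le_of_abs_le (hSb x 0); linarith
        exact mul_le_mul (hρb x 0).2
          (Real.rpow_le_rpow h2.le (by linarith) hp0)
          (Real.rpow_nonneg h2.le p) hCρpos.le
      calc ∫ x, ρ x 0 * (S₀ - S x 0) ^ p ∂μ0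
          ≤ ∫ _x, Cρ * (S₀ - m₀) ^ p ∂μ0 :=
            integral_mono_ae hint0 (integrable_const _) hle
        _ = Cρ * (S₀ - m₀) ^ p * β := by
            rw [integral_const, smul_eq_mul, mul_comm]; rfl
    exact le_trans hlow (le_trans (hLp p hp) hup)
  -- now derive a contradiction by letting p → ∞ along the naturals
  have hb : 0 < S₀ - m₀ := by linarith
  have hc : S₀ - m₀ < S₀ - a := by linarith
  have hr : 1 < (S₀ - a) / (S₀ - m₀) := (one_lt_div hb).mpr hc
  obtain ⟨n, hn⟩ := pow_unbounded_of_one_lt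
    (Cρ * β / (ρ₀ * α) + 1) hr
  set q : ℝ := max (n : ℝ) 2 with hq
  have hq1 : (1:ℝ) < q := lt_of_lt_of_le one_lt_two (le_max_right _ _)
  -- evaluate the key inequality at p = q
  have hkey := key q hq1
  have h1 : ((S₀ - a) / (S₀ - m₀)) ^ (n:ℕ) ≤ ((S₀ - a) / (S₀ - m₀)) ^ q := by
    rw [← Real.rpow_natCast ((S₀ - a) / (S₀ - m₀)) n]
    exact Real.rpow_le_rpow_left_iff hr |>.mpr (le_max_left _ _)
  have hrq : Cρ * β / (ρ₀ * α) + 1 ≤ ((S₀ - a) / (S₀ - m₀)) ^ q :=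
    le_trans hn.le h1
  have hdiv : ((S₀ - a) / (S₀ - m₀)) ^ q = (S₀ - a) ^ q / (S₀ - m₀) ^ q :=
    Real.div_rpow (by linarith) hb.le q
  have hbq : 0 < (S₀ - m₀) ^ q := Real.rpow_pos_of_pos hb q
  have hρα : 0 < ρ₀ * α := mul_pos hρ₀ hαpos
  -- from hkey : ρ₀ (S₀-a)^q α ≤ Cρ (S₀-m₀)^q β
  have h2 : (S₀ - a) ^ q / (S₀ - m₀) ^ q ≤ Cρ * β / (ρ₀ * α) := by
    rw [div_le_div_iff₀ hbq hρα]
    nlinarith [hkey]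
  rw [hdiv] at hrq
  have : Cρ * β / (ρ₀ * α) + 1 ≤ Cρ * β / (ρ₀ * α) := le_trans hrq h2
  linarith
end
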